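/- arXiv:0811.0523 — 3 statements merged into one kernel-verified Lean document; each statement's English description precedes it below -/
import Mathlib

section
/- Let A be the 5×6 matrix over ℂ[X₀,…,X₅] whose rows are (X₁, −X₀, 0, 0, 0, 0), (−X₅, X₂, −X₁, 0, 0, X₀), (0, 0, X₃, −X₂, 0, 0), (0, 0, 0, X₄, −X₃, 0), (0, 0, 0, 0, X₅, −X₄). Then for each i ∈ {0,…,5} there is a sign ε ∈ {1, −1} such that the determinant of the 5×5 submatrix of A obtained by deleting the i-th column equals ε · Xᵢ · (X₁X₂X₃X₄ − X₀X₃X₄X₅). In particular the ideal of 5×5 minors of A is generated by the six quartics Xᵢ·(X₁X₂X₃X₄ − X₀X₃X₄X₅), i = 0,…,5. -/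
open MvPolynomial

noncomputable section

/-- The polynomial ring `ℂ[X₀,…,X₅]`. -/
abbrev R6 : Type := MvPolynomial (Fin 6) ℂ

/-- The special quartic `W_M = X₁X₂X₃X₄ − X₀X₃X₄X₅`. -/
def WM : R6 := X 1 * X 2 * X 3 * X 4 - X 0 * X 3 * X 4 * X 5

/-- The `5×6` matrix of linear forms representing the bundle map `φ_M`. -/
def AM : Matrix (Fin 5) (Fin 6) R6 :=
  !![X 1, -X 0, 0, 0, 0, 0;
     -X 5, X 2, -X 1, 0, 0, X 0;
     0, 0, X 3, -X 2, 0, 0;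
     0, 0, 0, X 4, -X 3, 0;
     0, 0, 0, 0, X 5, -X 4]

theorem Ideal.span_range_eq_of_associated {α ι : Type*} [CommSemiring α] {f g : ι → α}
    (h : ∀ i, Associated (f i) (g i)) :
    Ideal.span (Set.range f) = Ideal.span (Set.range g) := by
  apply le_antisymm <;> rw [Ideal.span_le] <;> rintro _ ⟨i, rfl⟩
  · exact (Ideal.mem_iff_of_associated (h i).symm).1 (Ideal.subset_span ⟨i, rfl⟩)
  · exact (Ideal.mem_iff_of_associated (h i)).1 (Ideal.subset_span ⟨i, rfl⟩)

theorem det_AM_submatrix_succAbove (i : Fin 6) :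
    (AM.submatrix id i.succAbove).det = (-1) ^ (i.val + 1) * (X i * WM) := by
  fin_cases i <;>
    simp [AM, WM, Matrix.det_succ_row_zero, Fin.sum_univ_succ, Fin.succAbove] <;> ring

/-- The `5×5` minor of `AM` obtained by deleting the `i`-th column equals
`± Xᵢ·(X₁X₂X₃X₄ − X₀X₃X₄X₅)`; in particular the ideal of `5×5` minors of `AM`
is generated by the six quartics `Xᵢ·W_M`. -/
theorem stmt1 :
    (∀ i : Fin 6, ∃ ε : R6, (ε = 1 ∨ ε = -1) ∧
      (AM.submatrix id i.succAbove).det = ε * (X i * WM)) ∧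
    Ideal.span (Set.range fun i : Fin 6 => (AM.submatrix id i.succAbove).det) =
      Ideal.span (Set.range fun i : Fin 6 => X i * WM) := by
  refine ⟨fun i => ⟨_, neg_one_pow_eq_or R6 _, det_AM_submatrix_succAbove i⟩,
    Ideal.span_range_eq_of_associated fun i => ?_⟩
  rw [det_AM_submatrix_succAbove]
  exact associated_unit_mul_left _ _ (isUnit_neg_one.pow _)

end
end

section
/- Let W and W′ be quartic forms in ℂ[X₀,…,X₅]. Assume that the 21 second partial derivatives ∂²W/∂Xᵢ∂Xⱼ (0 ≤ i ≤ j ≤ 5) of W are linearly independent over ℂ, and that the jacobian spaces coincide: JW′ = JW. Then there exists a nonzero scalar α ∈ ℂ with W′ = α·W; that is, a quartic whose second partials are linearly independent is uniquely determined, up to scalar, by its jacobian space. -/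
/-!
Since `JW' = JW`, write `∂ᵢW' = ∑ₖ Aᵢₖ ∂ₖW`. Symmetry of `∂ⱼ∂ᵢW'` gives
`∑ₖ Aᵢₖ ∂ⱼ∂ₖW = ∑ₖ Aⱼₖ ∂ᵢ∂ₖW`, and comparing the coefficients of the independent second
partials `∂ᵢ∂ᵢW` and `∂ᵢ∂ⱼW` (for `i ≠ j`) shows that `A` is a scalar matrix `α`. Hence
`∂ᵢW' = α ∂ᵢW` for all `i`, and Euler's identity turns this into `W' = α W`. Finally `α ≠ 0`,
since otherwise `JW = JW' = 0` would kill all second partials of `W`.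
-/

open MvPolynomial

noncomputable section

/-- The jacobian space of a polynomial: the `ℂ`-span of its six first partial
derivatives. -/
def jacSpace (F : R6) : Submodule ℂ R6 :=
  Submodule.span ℂ (Set.range fun i : Fin 6 => pderiv i F)

namespace MvPolynomial

variable {R σ : Type*} [CommRing R]

theorem pderiv_pderiv_comm (i j : σ) (F : MvPolynomial σ R) :
    pderiv i (pderiv j F) = pderiv j (pderiv i F) := by
  have hbracket : ⁅pderiv i, pderiv j⁆ = (0 : Derivation R (MvPolynomial σ R) _) :=
    derivation_ext fun k => by
      classical
      rw [Derivation.commutator_apply]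
      simp [pderiv_X, Pi.single_apply, apply_ite]
  have h := congr($hbracket F)
  rwa [Derivation.commutator_apply, Derivation.zero_apply, sub_eq_zero] at h

def secondPartials (F : MvPolynomial σ R) : Sym2 σ → MvPolynomial σ R :=
  Sym2.lift ⟨fun i j => pderiv i (pderiv j F), fun i j => pderiv_pderiv_comm i j F⟩

@[simp]
theorem secondPartials_mk (F : MvPolynomial σ R) (i j : σ) :
    secondPartials F s(i, j) = pderiv i (pderiv j F) := rfl

theorem linearIndependent_secondPartials [LinearOrder σ] {F : MvPolynomial σ R}
    (h : LinearIndependent R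
      (fun p : {p : σ × σ // p.1 ≤ p.2} => pderiv p.1.1 (pderiv p.1.2 F))) :
    LinearIndependent R (secondPartials F) :=
  (linearIndependent_equiv Sym2.sortEquiv.symm).mp h

variable [Fintype σ]

theorem sum_smul_secondPartials_comm {F G : MvPolynomial σ R} {A : Matrix σ σ R}
    (hA : ∀ i, ∑ k, A i k • pderiv k F = pderiv i G) (i j : σ) :
    ∑ k, A i k • secondPartials F s(j, k) = ∑ k, A j k • secondPartials F s(i, k) := by
  have hderiv (i j : σ) : pderiv j (pderiv i G) = ∑ k, A i k • secondPartials F s(j, k) := by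
    simp [← hA, map_sum]
  rw [← hderiv, ← hderiv, pderiv_pderiv_comm]

theorem IsHomogeneous.eq_smul_of_pderiv_eq_smul [IsDomain R] [CharZero R]
    {F G : MvPolynomial σ R} {n : ℕ} (hn : n ≠ 0) (hF : F.IsHomogeneous n)
    (hG : G.IsHomogeneous n) {α : R} (h : ∀ i, pderiv i G = α • pderiv i F) : G = α • F := by
  refine smul_right_injective (MvPolynomial σ R) hn ?_
  calc n • G = ∑ i, X i * pderiv i G := hG.sum_X_mul_pderiv.symm
    _ = α • ∑ i, X i * pderiv i F := by simp [h, Finset.smul_sum]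
    _ = n • (α • F) := by rw [hF.sum_X_mul_pderiv, smul_comm]

end MvPolynomial

theorem Matrix.exists_eq_scalar_of_linearIndependent_sym2 {K M σ : Type*} [Semiring K]
    [AddCommMonoid M] [Module K M] [Fintype σ] [DecidableEq σ] {g : Sym2 σ → M}
    (hg : LinearIndependent K g) {A : Matrix σ σ K}
    (hA : ∀ i j, ∑ k, A i k • g s(j, k) = ∑ k, A j k • g s(i, k)) :
    ∃ α, A = Matrix.scalar σ α := by
  have hentries : ∀ i j, i ≠ j → A j i = 0 ∧ A j j = A i i := by
    intro i j hij
    have h := hg (a₁ := ∑ k, Finsupp.single s(i, k) (A j k))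
      (a₂ := ∑ k, Finsupp.single s(j, k) (A i k)) (by simpa [map_sum] using hA j i)
    constructor
    · simpa [Finsupp.finsetSum_apply, Finsupp.single_apply, hij] using congr($h s(i, i))
    · simpa [Finsupp.finsetSum_apply, Finsupp.single_apply, hij, hij.symm]
        using congr($h s(i, j))
  rcases isEmpty_or_nonempty σ with hσ | ⟨⟨i₀⟩⟩
  · exact ⟨0, Matrix.ext fun i => isEmptyElim i⟩
  refine ⟨A i₀ i₀, Matrix.ext fun i j => ?_⟩
  rcases eq_or_ne i j with rfl | hij
  · rcases eq_or_ne i₀ i with rfl | hi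
    · simp
    · simp [(hentries i₀ i hi).2]
  · simp [hij, (hentries j i hij.symm).1]

/-- A quartic form whose 21 second partial derivatives are linearly independent
is determined, up to a nonzero scalar, by its jacobian space. -/
theorem stmt3 (W W' : R6) (hW : W.IsHomogeneous 4) (hW' : W'.IsHomogeneous 4)
    (hind : LinearIndependent ℂ
      (fun p : {p : Fin 6 × Fin 6 // p.1 ≤ p.2} => pderiv p.1.1 (pderiv p.1.2 W)))
    (hJ : jacSpace W' = jacSpace W) :
    ∃ α : ℂ, α ≠ 0 ∧ W' = α • W := by
  have hli := linearIndependent_secondPartials hind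
  have hmem (i : Fin 6) : pderiv i W' ∈ jacSpace W := hJ ▸ Submodule.subset_span ⟨i, rfl⟩
  choose A hA using fun i => (Submodule.mem_span_range_iff_exists_fun ℂ).mp (hmem i)
  obtain ⟨α, rfl⟩ := Matrix.exists_eq_scalar_of_linearIndependent_sym2 hli
    (sum_smul_secondPartials_comm (A := A) hA)
  have hpderiv (i : Fin 6) : pderiv i W' = α • pderiv i W := by
    simp [← hA, Matrix.scalar_apply, Matrix.diagonal_apply, ite_smul]
  have hW'α : W' = α • W := hW.eq_smul_of_pderiv_eq_smul four_ne_zero hW' hpderiv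
  refine ⟨α, fun hα => hli.ne_zero s(0, 0) ?_, hW'α⟩
  have h0 : pderiv 0 W = 0 := by
    have hmem0 : pderiv 0 W ∈ jacSpace W' := hJ ▸ Submodule.subset_span ⟨0, rfl⟩
    simpa [hW'α, hα, jacSpace] using hmem0
  simp [h0]

end
end

section
/- Let F₀,…,F₅ be polynomials lying in the jacobian space JW_M of W_M := X₁X₂X₃X₄ − X₀X₃X₄X₅ and satisfying the symmetry conditions ∂Fᵢ/∂Xⱼ = ∂Fⱼ/∂Xᵢ for all 0 ≤ i, j ≤ 5. Then there exists a scalar λ ∈ ℂ such that Fᵢ = λ·∂W_M/∂Xᵢ for every i = 0,…,5. -/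
/-
Write `Fᵢ = ∑ₖ cᵢₖ ∂ₖW_M`. Applying `∂ₐ∂_b` to `∂ⱼFᵢ = ∂ᵢFⱼ` and evaluating at `0` shows that
`c · H` is a symmetric matrix, where `H` is the (constant) Hessian of the quadric `∂ₐ∂_b W_M`.
For nine choices of `a, b` this quadric is `±XₚX_q`, with Hessian `E_pq + E_qp`; symmetry of
`c · (E_pq + E_qp)` kills the entries `cᵢₚ`, `i ∉ {p, q}`, and gives `cₚₚ = c_qq`. The nine pairs
`{p, q}` are the edges of a graph on `Fin 6` in which `3` is adjacent to every other vertex and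
every vertex has at least two neighbours, so `c` is a scalar matrix.
-/

open MvPolynomial

noncomputable section

open Matrix

section Hessian

variable {σ R : Type*} [CommSemiring R]

theorem MvPolynomial.pderiv_pderiv_comm_s6 (i j : σ) (f : MvPolynomial σ R) :
    pderiv i (pderiv j f) = pderiv j (pderiv i f) := by
  classical
  induction f using MvPolynomial.induction_on with
  | C a => simp
  | add p q hp hq => simp [hp, hq]
  | mul_X p n hp =>
    simp only [pderiv_mul, map_add, pderiv_X, Pi.single_apply]
    split_ifs <;> simp [hp, add_comm, add_left_comm]

def hessianAtZero (Q : MvPolynomial σ R) : Matrix σ σ R :=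
  Matrix.of fun j k => constantCoeff (pderiv j (pderiv k Q))

theorem hessianAtZero_neg {R : Type*} [CommRing R] (Q : MvPolynomial σ R) :
    hessianAtZero (-Q) = -hessianAtZero Q := by
  ext j k
  simp [hessianAtZero]

theorem hessianAtZero_X_mul_X [DecidableEq σ] (p q : σ) :
    hessianAtZero (X p * X q : MvPolynomial σ R) = single p q 1 + single q p 1 := by
  ext j k
  simp only [hessianAtZero, of_apply, pderiv_mul, pderiv_X, Pi.single_apply, Matrix.add_apply,
    single_apply]
  split_ifs <;> simp_all

theorem isSymm_mul_hessianAtZero [Fintype σ] {P : MvPolynomial σ R} {F : σ → MvPolynomial σ R}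
    (c : Matrix σ σ R) (hF : ∀ i, ∑ k, c i k • pderiv k P = F i)
    (hsym : ∀ i j, pderiv j (F i) = pderiv i (F j)) (a b : σ) :
    (c * hessianAtZero (pderiv a (pderiv b P))).IsSymm := by
  have entry : ∀ i j, (c * hessianAtZero (pderiv a (pderiv b P))) i j =
      constantCoeff (pderiv a (pderiv b (pderiv j (F i)))) := by
    intro i j
    simp only [← hF, mul_apply, hessianAtZero, of_apply, map_sum, Derivation.map_smul,
      constantCoeff_smul, smul_eq_mul, pderiv_pderiv_comm_s6 _ _]
  exact IsSymm.ext fun i j => by rw [entry, entry, hsym]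

end Hessian

namespace Matrix

variable {n R : Type*} [Fintype n] [DecidableEq n] [Semiring R] {c : Matrix n n R} {p q : n}

theorem IsSymm.apply_eq_zero_of_mul_single_add_single
    (h : (c * (single p q 1 + single q p 1)).IsSymm) (hpq : p ≠ q) {i : n} (hip : i ≠ p)
    (hiq : i ≠ q) : c i p = 0 := by
  simpa [Matrix.mul_add, hpq, hpq.symm, hip, hiq] using (h.apply i q).symm

theorem IsSymm.apply_self_eq_of_mul_single_add_single
    (h : (c * (single p q 1 + single q p 1)).IsSymm) (hpq : p ≠ q) : c p p = c q q := by
  simpa [Matrix.mul_add, hpq, hpq.symm] using (h.apply p q).symm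

theorem eq_smul_one_of_isSymm_mul_single_add_single (G : SimpleGraph n) (r : n)
    (h : ∀ p q, G.Adj p q → (c * (single p q 1 + single q p 1)).IsSymm)
    (hdeg : ∀ i k, i ≠ k → ∃ q, q ≠ i ∧ G.Adj k q) (hr : ∀ i, i ≠ r → G.Adj i r) :
    c = c r r • 1 := by
  ext i k
  rcases eq_or_ne i k with rfl | hik
  · rcases eq_or_ne i r with rfl | hir
    · simp
    · simpa using
        (h i r (hr i hir)).apply_self_eq_of_mul_single_add_single (G.ne_of_adj (hr i hir))
  · obtain ⟨q, hqi, hkq⟩ := hdeg i k hik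
    simpa [hik] using
      (h k q hkq).apply_eq_zero_of_mul_single_add_single (G.ne_of_adj hkq) hik hqi.symm

end Matrix

/-- The edges `{p, q}` are the pairs for which `±XₚX_q` is a second partial derivative of
`W_M`. -/
def wmGraph : SimpleGraph (Fin 6) := SimpleGraph.fromRel fun p _ => p = 3 ∨ p = 4

theorem exists_pderiv_pderiv_WM_eq {p q : Fin 6} (h : wmGraph.Adj p q) :
    ∃ a b : Fin 6,
      pderiv a (pderiv b WM) = X p * X q ∨ pderiv a (pderiv b WM) = -(X p * X q) := by
  wlog hp : p = 3 ∨ p = 4 generalizing p q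
  · obtain ⟨a, b, hab⟩ := this h.symm (by simp_all [wmGraph])
    exact ⟨a, b, by rwa [mul_comm (X q)] at hab⟩
  have hpq := h.ne
  rcases hp with rfl | rfl <;> fin_cases q <;> try exact absurd rfl hpq
  · exact ⟨4, 5, .inr <| by simp [WM, mul_comm]⟩
  · exact ⟨2, 4, .inl <| by simp [WM, mul_comm]⟩
  · exact ⟨1, 4, .inl <| by simp [WM, mul_comm]⟩
  · exact ⟨1, 2, .inl <| by simp [WM, mul_comm]⟩
  · exact ⟨0, 4, .inr <| by simp [WM, mul_comm]⟩
  · exact ⟨3, 5, .inr <| by simp [WM, mul_comm]⟩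
  · exact ⟨2, 3, .inl <| by simp [WM, mul_comm]⟩
  · exact ⟨1, 3, .inl <| by simp [WM, mul_comm]⟩
  · exact ⟨1, 2, .inl <| by simp [WM, mul_comm]⟩
  · exact ⟨0, 3, .inr <| by simp [WM, mul_comm]⟩

theorem wmGraph_exists_adj_ne (i k : Fin 6) (hik : i ≠ k) : ∃ q, q ≠ i ∧ wmGraph.Adj k q := by
  revert i k
  simp only [wmGraph, SimpleGraph.fromRel_adj]
  decide

theorem wmGraph_adj_three (i : Fin 6) (hi : i ≠ 3) : wmGraph.Adj i 3 := by
  revert i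
  simp only [wmGraph, SimpleGraph.fromRel_adj]
  decide

theorem isSymm_mul_single_add_single_of_wmGraph_adj {F : Fin 6 → R6}
    (c : Matrix (Fin 6) (Fin 6) ℂ) (hF : ∀ i, ∑ k, c i k • pderiv k WM = F i)
    (hsym : ∀ i j, pderiv j (F i) = pderiv i (F j)) {p q : Fin 6} (hpq : wmGraph.Adj p q) : (c * (single p q 1 + single q p 1)).IsSymm := by
  obtain ⟨a, b, hab⟩ := exists_pderiv_pderiv_WM_eq hpq
  have hc := isSymm_mul_hessianAtZero c hF hsym a b
  rcases hab with hab | hab <;> rw [hab] at hc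
  · rwa [hessianAtZero_X_mul_X] at hc
  · rw [hessianAtZero_neg, hessianAtZero_X_mul_X, Matrix.mul_neg] at hc
    simpa only [neg_neg] using hc.neg

/-- If `F₀,…,F₅ ∈ J W_M` satisfy `∂Fᵢ/∂Xⱼ = ∂Fⱼ/∂Xᵢ` for all `i, j`, then
`Fᵢ = λ·∂W_M/∂Xᵢ` for some scalar `λ` and every `i`. -/
theorem stmt6 (F : Fin 6 → R6) (hmem : ∀ i : Fin 6, F i ∈ jacSpace WM)
    (hsym : ∀ i j : Fin 6, pderiv j (F i) = pderiv i (F j)) :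
    ∃ lam : ℂ, ∀ i : Fin 6, F i = lam • pderiv i WM := by
  choose c hc using fun i => (Submodule.mem_span_range_iff_exists_fun ℂ).mp (hmem i)
  have hscalar : Matrix.of c = c 3 3 • 1 :=
    eq_smul_one_of_isSymm_mul_single_add_single wmGraph 3
      (fun _ _ => isSymm_mul_single_add_single_of_wmGraph_adj (.of c) hc hsym)
      wmGraph_exists_adj_ne wmGraph_adj_three
  refine ⟨c 3 3, fun i => ?_⟩
  have hci (k : Fin 6) : c i k = (c 3 3 • (1 : Matrix (Fin 6) (Fin 6) ℂ)) i k :=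
    congrFun₂ hscalar i k
  simp [← hc i, hci, one_apply]

end
end
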